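/- (Poincaré-type estimate on the region between two graphs; second estimate of Lemma 1 in single-rectangle form.) Under the stated assumptions, ∫_S ψ(x)² dx ≤ 2γ ∫₀^T ψ(t, G(t))² dt + 2γ² ∫_S ‖∇ψ(x)‖² dx. -/

import Mathlib

open MeasureTheory Set

/-- A point of the Euclidean plane given by its two coordinates. -/
noncomputable def pt2 (a b : ℝ) : EuclideanSpace ℝ (Fin 2) :=
  (WithLp.equiv 2 (Fin 2 → ℝ)).symm ![a, b]

namespace PoincareAux

/-- Cauchy–Schwarz for interval integrals of continuous functions. -/
lemma cs_interval (h : ℝ → ℝ) (hc : Continuous h) {a b : ℝ} (hab : a ≤ b) :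
    (∫ σ in a..b, |h σ|) ^ 2 ≤ (b - a) * ∫ σ in a..b, (h σ) ^ 2 := by
  set A := ∫ σ in a..b, |h σ| with hA
  rcases eq_or_lt_of_le hab with rfl | hlt
  · simp [hA]
  · have hℓ : (0:ℝ) < b - a := by linarith
    have hint1 : IntervalIntegrable (fun σ => |h σ|) volume a b :=
      (hc.abs).intervalIntegrable a b
    have hint2 : IntervalIntegrable (fun σ => (h σ)^2) volume a b :=
      (hc.pow 2).intervalIntegrable a b
    set c := A / (b - a) with hc'
    have key : 0 ≤ ∫ σ in a..b, (|h σ| - c) ^ 2 :=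
      intervalIntegral.integral_nonneg hab (fun _ _ => sq_nonneg _)
    have expand : ∫ σ in a..b, (|h σ| - c) ^ 2
        = (∫ σ in a..b, (h σ)^2) - 2 * c * A + c^2 * (b - a) := by
      have : ∀ σ, (|h σ| - c) ^ 2 = (h σ)^2 - (2*c) * |h σ| + c^2 := by
        intro σ; nlinarith [sq_abs (h σ)]
      rw [intervalIntegral.integral_congr (g := fun σ => (h σ)^2 - (2*c) * |h σ| + c^2)
        (fun σ _ => this σ)]
      rw [intervalIntegral.integral_add ((hint2.sub (hint1.const_mul _))) intervalIntegrable_const,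
        intervalIntegral.integral_sub hint2 (hint1.const_mul _),
        intervalIntegral.integral_const_mul, intervalIntegral.integral_const]
      simp only [smul_eq_mul]
      ring
    rw [expand] at key
    have hcl : c * (b - a) = A := by rw [hc', div_mul_cancel₀ _ hℓ.ne']
    nlinarith [key, hcl, hℓ, mul_le_mul_of_nonneg_left key hℓ.le]

lemma pt2_line (t : ℝ) : (fun s : ℝ => pt2 t s) = fun s => pt2 t 0 + s • pt2 0 1 := by
  funext s; ext i; fin_cases i <;> simp [pt2]

lemma pt2_comb : (fun p : ℝ × ℝ => pt2 p.1 p.2)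
    = fun p : ℝ × ℝ => p.1 • pt2 1 0 + p.2 • pt2 0 1 := by
  funext p; ext i; fin_cases i <;> simp [pt2]

lemma continuous_pt2 : Continuous fun p : ℝ × ℝ => pt2 p.1 p.2 := by
  rw [pt2_comb]; continuity

lemma hasDerivAt_pt2 (t s : ℝ) : HasDerivAt (fun s : ℝ => pt2 t s) (pt2 0 1) s := by
  rw [pt2_line t]
  simpa using ((hasDerivAt_id s).smul_const (pt2 0 1)).const_add (pt2 t 0)

lemma norm_pt2_01 : ‖pt2 0 1‖ = 1 := by
  simp [pt2, EuclideanSpace.norm_eq, Fin.sum_univ_two]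

lemma norm_gradient_eq (ψ : EuclideanSpace ℝ (Fin 2) → ℝ) (x) :
    ‖gradient ψ x‖ = ‖fderiv ℝ ψ x‖ := by simp [gradient]

lemma continuous_grad_norm_sq (ψ : EuclideanSpace ℝ (Fin 2) → ℝ) (hψ : ContDiff ℝ 1 ψ) :
    Continuous fun x => ‖gradient ψ x‖ ^ 2 := by
  have h1 : Continuous (fderiv ℝ ψ) := hψ.continuous_fderiv one_ne_zero
  have : Continuous fun x => ‖fderiv ℝ ψ x‖ ^ 2 := (h1.norm.pow 2)
  simpa only [norm_gradient_eq] using this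

/-- The inner (one-dimensional) estimate on a vertical slice. -/
lemma inner_estimate (γ : ℝ) (hγ : 0 < γ) (ψ : EuclideanSpace ℝ (Fin 2) → ℝ)
    (hψ : ContDiff ℝ 1 ψ) (t a b : ℝ) (hab : a ≤ b) (hba : b - a ≤ γ) :
    ∫ s in Ioo a b, (ψ (pt2 t s)) ^ 2
      ≤ 2 * γ * (ψ (pt2 t b)) ^ 2 + 2 * γ ^ 2 * ∫ s in Ioo a b, ‖gradient ψ (pt2 t s)‖ ^ 2 := by
  set w : ℝ → ℝ := fun s => ψ (pt2 t s) with hw_def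
  set d : ℝ → ℝ := fun s => fderiv ℝ ψ (pt2 t s) (pt2 0 1) with hd_def
  have hpc : Continuous fun s : ℝ => pt2 t s := by
    rw [pt2_line t]; continuity
  have hw : ∀ s, HasDerivAt w (d s) s := fun s =>
    ((hψ.differentiable one_ne_zero _).hasFDerivAt).comp_hasDerivAt s (hasDerivAt_pt2 t s)
  have hd_cont : Continuous d :=
    ((hψ.continuous_fderiv one_ne_zero).comp hpc).clm_apply continuous_const
  have hw_cont : Continuous w := hψ.continuous.comp hpc
  set J : ℝ := ∫ σ in a..b, (d σ) ^ 2 with hJ_def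
  have hJ_nonneg : 0 ≤ J := intervalIntegral.integral_nonneg hab fun _ _ => sq_nonneg _
  set C : ℝ := 2 * (w b) ^ 2 + 2 * γ * J with hC_def
  have hC_nonneg : 0 ≤ C := by positivity
  have bound : ∀ s ∈ Ioo a b, (w s) ^ 2 ≤ C := by
    intro s hs
    have hsab : a ≤ s := hs.1.le
    have hsb : s ≤ b := hs.2.le
    have ftc : ∫ σ in s..b, d σ = w b - w s :=
      intervalIntegral.integral_eq_sub_of_hasDerivAt (fun x _ => hw x)
        (hd_cont.intervalIntegrable s b)
    set I : ℝ := ∫ σ in s..b, d σ with hI_def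
    set B : ℝ := ∫ σ in a..b, |d σ| with hB_def
    have hB_nonneg : 0 ≤ B := intervalIntegral.integral_nonneg hab fun _ _ => abs_nonneg _
    have h1 : |I| ≤ ∫ σ in s..b, |d σ| := intervalIntegral.abs_integral_le_integral_abs hsb
    have h2 : ∫ σ in s..b, |d σ| ≤ B :=
      intervalIntegral.integral_mono_interval hsab hsb le_rfl
        (Filter.Eventually.of_forall fun _ => abs_nonneg _)
        ((hd_cont.abs).intervalIntegrable a b)
    have hIB : |I| ≤ B := h1.trans h2
    have hI2 : I ^ 2 ≤ B ^ 2 := by nlinarith [abs_nonneg I, neg_abs_le I, le_abs_self I]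
    have hcs : B ^ 2 ≤ (b - a) * J := cs_interval d hd_cont hab
    have hBJ : B ^ 2 ≤ γ * J := hcs.trans (by nlinarith)
    have hws : w s = w b - I := by rw [ftc]; ring
    rw [hws]
    nlinarith [sq_nonneg (w b + I)]
  have hIntw : IntegrableOn (fun s => (w s) ^ 2) (Ioo a b) :=
    ((hw_cont.pow 2).integrableOn_Icc (a := a) (b := b)).mono_set Ioo_subset_Icc_self
  have step1 : ∫ s in Ioo a b, (w s) ^ 2 ≤ (b - a) * C := by
    have := setIntegral_mono_on hIntw (integrableOn_const measure_Ioo_lt_top.ne)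
      measurableSet_Ioo bound
    calc ∫ s in Ioo a b, (w s) ^ 2 ≤ ∫ _ in Ioo a b, C := this
      _ = (b - a) * C := by
          rw [setIntegral_const, measureReal_def, Real.volume_Ioo, smul_eq_mul,
            ENNReal.toReal_ofReal (by linarith)]
  have step2 : (b - a) * C ≤ γ * C := by nlinarith
  have hJle : J ≤ ∫ s in Ioo a b, ‖gradient ψ (pt2 t s)‖ ^ 2 := by
    have hptw : ∀ s ∈ Ioo a b, (d s) ^ 2 ≤ ‖gradient ψ (pt2 t s)‖ ^ 2 := by
      intro s _
      have h3 : |d s| ≤ ‖fderiv ℝ ψ (pt2 t s)‖ := by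
        have := (fderiv ℝ ψ (pt2 t s)).le_opNorm (pt2 0 1)
        rw [norm_pt2_01, mul_one] at this
        simpa using this
      rw [norm_gradient_eq]
      nlinarith [abs_nonneg (d s), norm_nonneg (fderiv ℝ ψ (pt2 t s)), sq_abs (d s)]
    have hIntd : IntegrableOn (fun s => (d s) ^ 2) (Ioo a b) :=
      ((hd_cont.pow 2).integrableOn_Icc (a := a) (b := b)).mono_set Ioo_subset_Icc_self
    have hIntg : IntegrableOn (fun s => ‖gradient ψ (pt2 t s)‖ ^ 2) (Ioo a b) :=
      (((continuous_grad_norm_sq ψ hψ).comp hpc).integrableOn_Icc (a := a) (b := b)).mono_set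
        Ioo_subset_Icc_self
    have : J = ∫ s in Ioo a b, (d s) ^ 2 := by
      rw [hJ_def, intervalIntegral.integral_of_le hab, integral_Ioc_eq_integral_Ioo]
    rw [this]
    exact setIntegral_mono_on hIntd hIntg measurableSet_Ioo hptw
  calc ∫ s in Ioo a b, (w s) ^ 2 ≤ γ * C := step1.trans step2
    _ = 2 * γ * (w b) ^ 2 + 2 * γ ^ 2 * J := by rw [hC_def]; ring
    _ ≤ _ := by nlinarith

/-- Fubini for a continuous function on the region between two continuous graphs. -/
lemma fubini_region (T : ℝ) (g' G' : ℝ → ℝ) (hg' : Continuous g') (hG' : Continuous G')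
    (Q : ℝ × ℝ → ℝ) (hQ : Continuous Q) :
    IntegrableOn Q {p : ℝ × ℝ | p.1 ∈ Ioo 0 T ∧ p.2 ∈ Ioo (g' p.1) (G' p.1)} volume ∧
    IntegrableOn (fun t => ∫ s in Ioo (g' t) (G' t), Q (t, s)) (Ioo 0 T) volume ∧
    (∫ p in {p : ℝ × ℝ | p.1 ∈ Ioo 0 T ∧ p.2 ∈ Ioo (g' p.1) (G' p.1)}, Q p)
      = ∫ t in Ioo (0:ℝ) T, ∫ s in Ioo (g' t) (G' t), Q (t, s) := by
  set S' : Set (ℝ × ℝ) := {p : ℝ × ℝ | p.1 ∈ Ioo 0 T ∧ p.2 ∈ Ioo (g' p.1) (G' p.1)} with hS'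
  have hS'm : MeasurableSet S' :=
    measurableSet_regionBetween hg'.measurable hG'.measurable measurableSet_Ioo
  obtain ⟨C₁, hC₁⟩ := (isCompact_Icc (a := (0:ℝ)) (b := T)).exists_bound_of_continuousOn
    hg'.continuousOn
  obtain ⟨C₂, hC₂⟩ := (isCompact_Icc (a := (0:ℝ)) (b := T)).exists_bound_of_continuousOn
    hG'.continuousOn
  set M : ℝ := max C₁ C₂ with hM
  have hsub : S' ⊆ Icc (0:ℝ) T ×ˢ Icc (-M) M := by
    rintro ⟨t, s⟩ ⟨ht, hss⟩
    have ht' : t ∈ Icc (0:ℝ) T := Ioo_subset_Icc_self ht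
    have h₁ := hC₁ t ht'
    have h₂ := hC₂ t ht'
    rw [Real.norm_eq_abs, abs_le] at h₁ h₂
    refine ⟨ht', ?_, ?_⟩
    · have : -M ≤ g' t := by
        have := le_max_left C₁ C₂; rcases h₁ with ⟨h, _⟩; simp only [hM]; linarith
      exact this.trans hss.1.le
    · have : G' t ≤ M := by rcases h₂ with ⟨_, h⟩; exact h.trans (le_max_right C₁ C₂)
      exact hss.2.le.trans this
  have hQK : IntegrableOn Q (Icc (0:ℝ) T ×ˢ Icc (-M) M) volume :=
    hQ.continuousOn.integrableOn_compact (isCompact_Icc.prod isCompact_Icc)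
  have hQi : IntegrableOn Q S' volume := hQK.mono_set hsub
  have hInd : Integrable (S'.indicator Q) volume := (integrable_indicator_iff hS'm).2 hQi
  have hIndp : Integrable (S'.indicator Q) (volume.prod volume) := by
    rwa [← Measure.volume_eq_prod]
  have slice : ∀ t, (∫ s, S'.indicator Q (t, s))
      = (Ioo (0:ℝ) T).indicator (fun t => ∫ s in Ioo (g' t) (G' t), Q (t, s)) t := by
    intro t
    by_cases ht : t ∈ Ioo (0:ℝ) T
    · rw [indicator_of_mem ht, ← integral_indicator measurableSet_Ioo]
      congr 1; funext s
      by_cases hst : s ∈ Ioo (g' t) (G' t)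
      · rw [indicator_of_mem hst, indicator_of_mem (by exact ⟨ht, hst⟩)]
      · rw [indicator_of_notMem hst, indicator_of_notMem (fun h => hst h.2)]
    · rw [indicator_of_notMem ht]
      have h0 : ∀ s : ℝ, S'.indicator Q (t, s) = 0 := fun s =>
        indicator_of_notMem (fun h => ht h.1) _
      simp only [h0, integral_zero]
  have hSlice : Integrable (fun t => ∫ s, S'.indicator Q (t, s)) volume :=
    hIndp.integral_prod_left
  have hFint : IntegrableOn (fun t => ∫ s in Ioo (g' t) (G' t), Q (t, s)) (Ioo 0 T) volume := by
    rw [← integrable_indicator_iff measurableSet_Ioo]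
    exact hSlice.congr (Filter.Eventually.of_forall slice)
  refine ⟨hQi, hFint, ?_⟩
  calc ∫ p in S', Q p = ∫ p, S'.indicator Q p := (integral_indicator hS'm).symm
    _ = ∫ t, ∫ s, S'.indicator Q (t, s) := by
        rw [Measure.volume_eq_prod, integral_prod _ hIndp]
    _ = ∫ t, (Ioo (0:ℝ) T).indicator (fun t => ∫ s in Ioo (g' t) (G' t), Q (t, s)) t := by
        congr 1; funext t; exact slice t
    _ = _ := integral_indicator measurableSet_Ioo

noncomputable def e2 : (ℝ × ℝ) ≃ᵐ EuclideanSpace ℝ (Fin 2) :=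
  MeasurableEquiv.finTwoArrow.symm.trans (MeasurableEquiv.toLp 2 (Fin 2 → ℝ))

lemma e2_measurePreserving : MeasurePreserving e2 volume volume :=
  ((EuclideanSpace.volume_preserving_symm_measurableEquiv_toLp (Fin 2)).symm).comp
    ((volume_preserving_finTwoArrow ℝ).symm)

lemma e2_apply (a b : ℝ) : e2 (a, b) = pt2 a b := by
  ext i
  fin_cases i <;> simp [e2, pt2, MeasurableEquiv.coe_toLp, MeasurableEquiv.finTwoArrow]

lemma pt2_apply_zero (a b : ℝ) : (pt2 a b) 0 = a := by simp [pt2]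
lemma pt2_apply_one (a b : ℝ) : (pt2 a b) 1 = b := by simp [pt2]

end PoincareAux

open PoincareAux

/-- Poincaré-type estimate on the region between two graphs (second estimate of
Lemma 1, single-rectangle form). -/
theorem poincare_type_estimate_between_graphs
    (γ T : ℝ) (hγ : 0 < γ) (hT : 0 < T)
    (g G : ℝ → ℝ)
    (hg : ContinuousOn g (Icc 0 T)) (hG : ContinuousOn G (Icc 0 T))
    (hgG : ∀ t ∈ Icc (0:ℝ) T, g t ≤ G t ∧ G t ≤ g t + γ)
    (S : Set (EuclideanSpace ℝ (Fin 2)))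
    (hS : S = {x : EuclideanSpace ℝ (Fin 2) |
        x 0 ∈ Ioo (0:ℝ) T ∧ x 1 ∈ Ioo (g (x 0)) (G (x 0))})
    (ψ : EuclideanSpace ℝ (Fin 2) → ℝ) (hψ : ContDiff ℝ 1 ψ) :
    (∫ x in S, (ψ x)^2)
      ≤ 2 * γ * (∫ t in (0:ℝ)..T, (ψ (pt2 t (G t)))^2)
        + 2 * γ^2 * ∫ x in S, ‖gradient ψ x‖^2 := by
  -- clamped versions of g and G, continuous on all of ℝ
  set g' : ℝ → ℝ := fun t => g (projIcc 0 T hT.le t) with hg'_def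
  set G' : ℝ → ℝ := fun t => G (projIcc 0 T hT.le t) with hG'_def
  have hg'c : Continuous g' := hg.comp_continuous (continuous_subtype_val.comp continuous_projIcc) fun x => (projIcc 0 T hT.le x).2
  have hG'c : Continuous G' := hG.comp_continuous (continuous_subtype_val.comp continuous_projIcc) fun x => (projIcc 0 T hT.le x).2
  have hg'eq : ∀ t ∈ Icc (0:ℝ) T, g' t = g t := fun t ht => by
    simp [hg'_def, projIcc_of_mem hT.le ht]
  have hG'eq : ∀ t ∈ Icc (0:ℝ) T, G' t = G t := fun t ht => by
    simp [hG'_def, projIcc_of_mem hT.le ht]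
  set S' : Set (ℝ × ℝ) := {p : ℝ × ℝ | p.1 ∈ Ioo 0 T ∧ p.2 ∈ Ioo (g' p.1) (G' p.1)} with hS'_def
  -- transfer set integrals over S to integrals over S'
  have hpre : e2 ⁻¹' S = S' := by
    ext ⟨t, s⟩
    have h0 : (e2 (t, s)) 0 = t := by rw [e2_apply]; exact pt2_apply_zero t s
    have h1 : (e2 (t, s)) 1 = s := by rw [e2_apply]; exact pt2_apply_one t s
    simp only [hS, hS'_def, mem_preimage, mem_setOf_eq, h0, h1]
    constructor
    · rintro ⟨ht, hs⟩
      exact ⟨ht, by rwa [hg'eq t (Ioo_subset_Icc_self ht), hG'eq t (Ioo_subset_Icc_self ht)]⟩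
    · rintro ⟨ht, hs⟩
      exact ⟨ht, by rwa [hg'eq t (Ioo_subset_Icc_self ht), hG'eq t (Ioo_subset_Icc_self ht)] at hs⟩
  have transfer : ∀ Qf : EuclideanSpace ℝ (Fin 2) → ℝ,
      ∫ x in S, Qf x = ∫ p in S', Qf (pt2 p.1 p.2) := by
    intro Qf
    have := (e2_measurePreserving.setIntegral_preimage_emb e2.measurableEmbedding Qf S).symm
    have he : (fun x : ℝ × ℝ => Qf (e2 x)) = fun p : ℝ × ℝ => Qf (pt2 p.1 p.2) :=
      funext fun p => congrArg Qf (e2_apply p.1 p.2)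
    rw [this, hpre, he]
  -- the two integrands, as functions on ℝ × ℝ
  set Q₁ : ℝ × ℝ → ℝ := fun p => (ψ (pt2 p.1 p.2)) ^ 2 with hQ₁_def
  set Q₂ : ℝ × ℝ → ℝ := fun p => ‖gradient ψ (pt2 p.1 p.2)‖ ^ 2 with hQ₂_def
  have hQ₁c : Continuous Q₁ := ((hψ.continuous.comp continuous_pt2).pow 2)
  have hQ₂c : Continuous Q₂ := (continuous_grad_norm_sq ψ hψ).comp continuous_pt2
  obtain ⟨hQ₁i, hF₁i, hFub₁⟩ := fubini_region T g' G' hg'c hG'c Q₁ hQ₁c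
  obtain ⟨hQ₂i, hF₂i, hFub₂⟩ := fubini_region T g' G' hg'c hG'c Q₂ hQ₂c
  -- rewrite both sides
  have L1 : ∫ x in S, (ψ x) ^ 2
      = ∫ t in Ioo (0:ℝ) T, ∫ s in Ioo (g' t) (G' t), (ψ (pt2 t s)) ^ 2 := by
    rw [transfer (fun x => (ψ x) ^ 2)]; exact hFub₁
  have L2 : ∫ x in S, ‖gradient ψ x‖ ^ 2
      = ∫ t in Ioo (0:ℝ) T, ∫ s in Ioo (g' t) (G' t), ‖gradient ψ (pt2 t s)‖ ^ 2 := by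
    rw [transfer (fun x => ‖gradient ψ x‖ ^ 2)]; exact hFub₂
  -- integrability of the RHS majorant
  have hbdryc : Continuous fun t => (ψ (pt2 t (G' t))) ^ 2 := by
    have : Continuous fun t : ℝ => pt2 t (G' t) :=
      continuous_pt2.comp (continuous_id.prodMk hG'c)
    exact (hψ.continuous.comp this).pow 2
  have hbdry_int : IntegrableOn (fun t => (ψ (pt2 t (G' t))) ^ 2) (Ioo 0 T) :=
    (hbdryc.integrableOn_Icc (a := (0:ℝ)) (b := T)).mono_set Ioo_subset_Icc_self
  have hmaj_int : IntegrableOn (fun t => 2 * γ * (ψ (pt2 t (G' t))) ^ 2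
      + 2 * γ ^ 2 * ∫ s in Ioo (g' t) (G' t), ‖gradient ψ (pt2 t s)‖ ^ 2) (Ioo 0 T) :=
    (hbdry_int.const_mul _).add (hF₂i.const_mul _)
  -- the main monotonicity step
  have main : ∫ t in Ioo (0:ℝ) T, ∫ s in Ioo (g' t) (G' t), (ψ (pt2 t s)) ^ 2
      ≤ ∫ t in Ioo (0:ℝ) T, (2 * γ * (ψ (pt2 t (G' t))) ^ 2
        + 2 * γ ^ 2 * ∫ s in Ioo (g' t) (G' t), ‖gradient ψ (pt2 t s)‖ ^ 2) := by
    refine setIntegral_mono_on hF₁i hmaj_int measurableSet_Ioo ?_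
    intro t ht
    have ht' : t ∈ Icc (0:ℝ) T := Ioo_subset_Icc_self ht
    obtain ⟨h1, h2⟩ := hgG t ht'
    have hab : g' t ≤ G' t := by rw [hg'eq t ht', hG'eq t ht']; exact h1
    have hba : G' t - g' t ≤ γ := by rw [hg'eq t ht', hG'eq t ht']; linarith
    exact inner_estimate γ hγ ψ hψ t (g' t) (G' t) hab hba
  -- compute the RHS integral
  have split : ∫ t in Ioo (0:ℝ) T, (2 * γ * (ψ (pt2 t (G' t))) ^ 2
        + 2 * γ ^ 2 * ∫ s in Ioo (g' t) (G' t), ‖gradient ψ (pt2 t s)‖ ^ 2)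
      = 2 * γ * (∫ t in Ioo (0:ℝ) T, (ψ (pt2 t (G' t))) ^ 2)
        + 2 * γ ^ 2 * ∫ t in Ioo (0:ℝ) T, ∫ s in Ioo (g' t) (G' t),
            ‖gradient ψ (pt2 t s)‖ ^ 2 := by
    rw [integral_add (hbdry_int.const_mul _) (hF₂i.const_mul _),
      integral_const_mul, integral_const_mul]
  have bdry_eq : ∫ t in Ioo (0:ℝ) T, (ψ (pt2 t (G' t))) ^ 2
      = ∫ t in (0:ℝ)..T, (ψ (pt2 t (G t))) ^ 2 := by
    rw [intervalIntegral.integral_of_le hT.le, integral_Ioc_eq_integral_Ioo]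
    refine setIntegral_congr_fun measurableSet_Ioo fun t ht => ?_
    rw [hG'eq t (Ioo_subset_Icc_self ht)]
  calc ∫ x in S, (ψ x) ^ 2
      = ∫ t in Ioo (0:ℝ) T, ∫ s in Ioo (g' t) (G' t), (ψ (pt2 t s)) ^ 2 := L1
    _ ≤ _ := main
    _ = 2 * γ * (∫ t in (0:ℝ)..T, (ψ (pt2 t (G t))) ^ 2)
        + 2 * γ ^ 2 * ∫ x in S, ‖gradient ψ x‖ ^ 2 := by
        rw [split, bdry_eq, ← L2]
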